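/- Let $p_1, \dots, p_n$ be i.i.d. nonnegative random variables, independent of a positive-integer-valued random variable $n$, and let $\eta = \max_{1 \le i \le n} p_i$. If $\mathbb{E}[p_1^k] < \infty$ for a natural number $k \ge 1$, then $\mathbb{E}[\eta] \le (\mathbb{E}[n])^{1/k} \cdot (\mathbb{E}[p_1^k])^{1/k}$. -/

import Mathlib

/-!
Since `η` is the largest of the nonnegative `p i` with `i < n`, pointwise `η ^ k ≤ ∑_{i<n} p_i ^ k`.
Wald's identity evaluates the expectation of the right-hand side as `E[n] * E[p_0 ^ k]`: the
summand `p_i ^ k` is present exactly on the event `{i < n}`, which is determined by `n` and hence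
independent of `p_i`. Jensen's inequality `(E η) ^ k ≤ E[η ^ k]` then gives the bound after taking
`k`-th roots.
-/

open MeasureTheory ProbabilityTheory Real Finset
open scoped ENNReal

section Wald

variable {Ω : Type*} {mΩ : MeasurableSpace Ω} {μ : Measure Ω} {N : Ω → ℕ}

theorem measurable_sum_range {E : Type*} [AddCommMonoid E] [MeasurableSpace E] [MeasurableAdd₂ E]
    (hN : Measurable N) {X : ℕ → Ω → E} (hX : ∀ i, Measurable (X i)) :
    Measurable fun ω => ∑ i ∈ range (N ω), X i ω := by
  have h : Measurable fun q : Ω × ℕ => ∑ i ∈ range q.2, X i q.1 :=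
    measurable_from_prod_countable_left fun m => Finset.measurable_sum (range m) fun i _ => hX i
  exact h.comp (measurable_id.prodMk hN)

theorem lintegral_sum_range_eq_tsum_lintegral_indicator_mul (hN : Measurable N)
    {f : ℕ → Ω → ℝ≥0∞} (hf : ∀ i, Measurable (f i)) :
    ∫⁻ ω, ∑ i ∈ range (N ω), f i ω ∂μ =
      ∑' i, ∫⁻ ω, {ω | i < N ω}.indicator 1 ω * f i ω ∂μ := by
  have hsum : ∀ ω, ∑ i ∈ range (N ω), f i ω = ∑' i, {ω | i < N ω}.indicator 1 ω * f i ω := by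
    intro ω
    rw [sum_eq_tsum_indicator]
    congr 1 with i
    by_cases hi : i < N ω <;> simp [hi]
  simp_rw [hsum]
  exact lintegral_tsum fun i =>
    ((measurable_one.indicator (hN measurableSet_Ioi)).mul (hf i)).aemeasurable

theorem tsum_measure_lt_eq_lintegral (hN : Measurable N) :
    ∑' i, μ {ω | i < N ω} = ∫⁻ ω, N ω ∂μ := by
  have h := lintegral_sum_range_eq_tsum_lintegral_indicator_mul (μ := μ) hN
    (f := fun _ _ => 1) fun _ => measurable_const
  simp only [sum_const, card_range, nsmul_eq_mul, mul_one] at h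
  simp_rw [h, lintegral_indicator_one (measurableSet_lt measurable_const hN)]

theorem lintegral_sum_range_eq_tsum_measure_mul (hN : Measurable N)
    {f : ℕ → Ω → ℝ≥0∞} (hf : ∀ i, Measurable (f i)) (hind : ∀ i, N ⟂ᵢ[μ] f i) :
    ∫⁻ ω, ∑ i ∈ range (N ω), f i ω ∂μ = ∑' i, μ {ω | i < N ω} * ∫⁻ ω, f i ω ∂μ := by
  rw [lintegral_sum_range_eq_tsum_lintegral_indicator_mul hN hf]
  congr 1 with i
  have hmeas : Measurable ((Set.Ioi i).indicator (1 : ℕ → ℝ≥0∞)) :=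
    measurable_one.indicator measurableSet_Ioi
  have hcomp : {ω | i < N ω}.indicator (1 : Ω → ℝ≥0∞) = (Set.Ioi i).indicator 1 ∘ N := by
    ext ω; simp [Set.indicator_apply]
  rw [hcomp, lintegral_mul_eq_lintegral_mul_lintegral_of_indepFun'' (hmeas.comp hN).aemeasurable
    (hf i).aemeasurable ((hind i).comp hmeas measurable_id),
    ← hcomp, lintegral_indicator_one (measurableSet_lt measurable_const hN)]

theorem lintegral_sum_range_eq_lintegral_mul (hN : Measurable N)
    {f : ℕ → Ω → ℝ≥0∞} (hf : ∀ i, Measurable (f i)) (hind : ∀ i, N ⟂ᵢ[μ] f i) {m : ℝ≥0∞}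
    (hmean : ∀ i, ∫⁻ ω, f i ω ∂μ = m) :
    ∫⁻ ω, ∑ i ∈ range (N ω), f i ω ∂μ = (∫⁻ ω, N ω ∂μ) * m := by
  simp_rw [lintegral_sum_range_eq_tsum_measure_mul hN hf hind, hmean, ENNReal.tsum_mul_right,
    tsum_measure_lt_eq_lintegral hN]

variable (hN : Measurable N) (hNint : Integrable (fun ω => (N ω : ℝ)) μ) {X : ℕ → Ω → ℝ}
  (hX : ∀ i, Measurable (X i)) (hX0 : ∀ i ω, 0 ≤ X i ω) (hXint : Integrable (X 0) μ)
  (hident : ∀ i, IdentDistrib (X i) (X 0) μ μ) (hind : ∀ i, N ⟂ᵢ[μ] X i)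
include hN hNint hX hX0 hXint hident hind

theorem lintegral_ofReal_sum_range_eq :
    ∫⁻ ω, ENNReal.ofReal (∑ i ∈ range (N ω), X i ω) ∂μ =
      ENNReal.ofReal ((∫ ω, (N ω : ℝ) ∂μ) * ∫ ω, X 0 ω ∂μ) := by
  have hmean (i : ℕ) : ∫⁻ ω, ENNReal.ofReal (X i ω) ∂μ = ENNReal.ofReal (∫ ω, X 0 ω ∂μ) :=
    ((hident i).comp ENNReal.measurable_ofReal).lintegral_eq.trans
      (ofReal_integral_eq_lintegral_ofReal hXint (.of_forall (hX0 0))).symm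
  have hNlint : ∫⁻ ω, (N ω : ℝ≥0∞) ∂μ = ENNReal.ofReal (∫ ω, (N ω : ℝ) ∂μ) := by
    simp_rw [ofReal_integral_eq_lintegral_ofReal hNint (.of_forall fun ω => N ω |>.cast_nonneg),
      ENNReal.ofReal_natCast]
  simp_rw [ENNReal.ofReal_sum_of_nonneg fun i _ => hX0 i _]
  rw [lintegral_sum_range_eq_lintegral_mul hN (f := fun i ω => ENNReal.ofReal (X i ω))
    (fun i => (hX i).ennreal_ofReal)
    (fun i => (hind i).comp measurable_id ENNReal.measurable_ofReal) hmean, hNlint,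
    ENNReal.ofReal_mul (integral_nonneg fun ω => (N ω).cast_nonneg)]

theorem integrable_sum_range : Integrable (fun ω => ∑ i ∈ range (N ω), X i ω) μ := by
  refine ⟨(measurable_sum_range hN hX).aestronglyMeasurable, ?_⟩
  rw [hasFiniteIntegral_iff_ofReal (.of_forall fun ω => sum_nonneg fun i _ => hX0 i ω),
    lintegral_ofReal_sum_range_eq hN hNint hX hX0 hXint hident hind]
  exact ENNReal.ofReal_lt_top

theorem integral_sum_range_eq_mul :
    ∫ ω, ∑ i ∈ range (N ω), X i ω ∂μ = (∫ ω, (N ω : ℝ) ∂μ) * ∫ ω, X 0 ω ∂μ := by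
  rw [integral_eq_lintegral_of_nonneg_ae (.of_forall fun ω => sum_nonneg fun i _ => hX0 i ω)
    (measurable_sum_range hN hX).aestronglyMeasurable,
    lintegral_ofReal_sum_range_eq hN hNint hX hX0 hXint hident hind, ENNReal.toReal_ofReal
    (mul_nonneg (integral_nonneg fun ω => (N ω).cast_nonneg) (integral_nonneg (hX0 0)))]

end Wald

theorem Finset.pow_sup'_le_sum_pow {R ι : Type*} [Semiring R] [LinearOrder R] [IsOrderedRing R]
    {s : Finset ι} (H : s.Nonempty) {f : ι → R} (hf : ∀ i ∈ s, 0 ≤ f i) (k : ℕ) :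
    s.sup' H f ^ k ≤ ∑ i ∈ s, f i ^ k := by
  obtain ⟨j, hj, hjmax⟩ := exists_mem_eq_sup' H f
  rw [hjmax]
  exact single_le_sum (fun i hi => pow_nonneg (hf i hi) k) hj

theorem pow_integral_le_integral_pow {Ω : Type*} {mΩ : MeasurableSpace Ω} {μ : Measure Ω}
    [IsProbabilityMeasure μ] {X : Ω → ℝ} (hX0 : ∀ᵐ ω ∂μ, 0 ≤ X ω) (hX : Integrable X μ) (k : ℕ)
    (hXk : Integrable (fun ω => X ω ^ k) μ) :
    (∫ ω, X ω ∂μ) ^ k ≤ ∫ ω, X ω ^ k ∂μ :=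
  (convexOn_pow k).map_integral_le (continuous_pow k).continuousOn isClosed_Ici hX0 hX hXk

theorem Real.le_rpow_one_div_of_pow_le {a b : ℝ} {k : ℕ} (ha : 0 ≤ a) (hk : k ≠ 0)
    (h : a ^ k ≤ b) : a ≤ b ^ ((1 : ℝ) / k) := by
  rw [one_div, le_rpow_inv_iff_of_pos ha ((pow_nonneg ha k).trans h) (by positivity)]
  exact_mod_cast h

theorem stmt_4_general {Ω : Type*} [MeasureSpace Ω] [IsProbabilityMeasure (volume : Measure Ω)]
    (p : ℕ → Ω → ℝ) (n : Ω → ℕ)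
    (hpmeas : ∀ i, Measurable (p i)) (hnmeas : Measurable n)
    (hp0 : ∀ i ω, 0 ≤ p i ω) (hn : ∀ ω, 1 ≤ n ω)
    -- i.i.d. workloads
    (hident : ∀ i, IdentDistrib (p i) (p 0) volume volume)
    -- the number of summands is independent of the workloads
    (hnindep : IndepFun n (fun ω i => p i ω) volume)
    (k : ℕ) (hk : 1 ≤ k)
    (hmom : Integrable (fun ω => (p 0 ω) ^ k))
    (hnint : Integrable (fun ω => (n ω : ℝ)))
    (η : Ω → ℝ)
    (hη : ∀ ω, η ω = (Finset.range (n ω)).sup'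
      (Finset.nonempty_range_iff.mpr (Nat.one_le_iff_ne_zero.mp (hn ω))) (fun i => p i ω))
    (hηint : Integrable η) :
    ∫ ω, η ω ≤ (∫ ω, (n ω : ℝ)) ^ ((1 : ℝ) / k) * (∫ ω, (p 0 ω) ^ k) ^ ((1 : ℝ) / k) := by
  have hη0 (ω : Ω) : 0 ≤ η ω :=
    hη ω ▸ (hp0 0 ω).trans (le_sup' (fun i => p i ω) (mem_range.2 (hn ω)))
  have hηk_le (ω : Ω) : η ω ^ k ≤ ∑ i ∈ range (n ω), p i ω ^ k :=
    hη ω ▸ pow_sup'_le_sum_pow _ (fun i _ => hp0 i ω) k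
  have hmeas (i : ℕ) : Measurable fun ω => p i ω ^ k := (hpmeas i).pow_const k
  have hp0k (i : ℕ) (ω : Ω) : 0 ≤ p i ω ^ k := pow_nonneg (hp0 i ω) k
  have hident' (i : ℕ) : IdentDistrib (fun ω => p i ω ^ k) (fun ω => p 0 ω ^ k) :=
    (hident i).comp (measurable_id.pow_const k)
  have hind (i : ℕ) : IndepFun n (fun ω => p i ω ^ k) :=
    hnindep.comp measurable_id ((measurable_pi_apply i).pow_const k)
  have hsum_int := integrable_sum_range hnmeas hnint hmeas hp0k hmom hident' hind
  have hηk_int : Integrable fun ω => η ω ^ k :=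
    integrable_of_le_of_le (hηint.aestronglyMeasurable.pow k)
      (.of_forall fun ω => pow_nonneg (hη0 ω) k) (.of_forall hηk_le) (integrable_zero _ _ _)
      hsum_int
  have hmoment : (∫ ω, η ω) ^ k ≤ (∫ ω, (n ω : ℝ)) * ∫ ω, p 0 ω ^ k :=
    calc (∫ ω, η ω) ^ k ≤ ∫ ω, η ω ^ k :=
          pow_integral_le_integral_pow (.of_forall hη0) hηint k hηk_int
      _ ≤ ∫ ω, ∑ i ∈ range (n ω), p i ω ^ k := integral_mono hηk_int hsum_int hηk_le
      _ = (∫ ω, (n ω : ℝ)) * ∫ ω, p 0 ω ^ k :=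
          integral_sum_range_eq_mul hnmeas hnint hmeas hp0k hmom hident' hind
  rw [← mul_rpow (integral_nonneg fun ω => (n ω).cast_nonneg) (integral_nonneg (hp0k 0))]
  exact le_rpow_one_div_of_pow_le (integral_nonneg hη0) (by omega) hmoment

theorem stmt_4 {Ω : Type*} [MeasureSpace Ω] [IsProbabilityMeasure (volume : Measure Ω)]
    (p : ℕ → Ω → ℝ) (n : Ω → ℕ)
    (hpmeas : ∀ i, Measurable (p i)) (hnmeas : Measurable n)
    (hp0 : ∀ i ω, 0 ≤ p i ω) (hn : ∀ ω, 1 ≤ n ω)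
    -- i.i.d. workloads
    (hident : ∀ i, IdentDistrib (p i) (p 0) volume volume)
    (hindep : iIndepFun p volume)
    -- the number of summands is independent of the workloads
    (hnindep : IndepFun n (fun ω i => p i ω) volume)
    (k : ℕ) (hk : 1 ≤ k)
    (hmom : Integrable (fun ω => (p 0 ω) ^ k))
    (hnint : Integrable (fun ω => (n ω : ℝ)))
    (η : Ω → ℝ)
    (hη : ∀ ω, η ω = (Finset.range (n ω)).sup'
      (Finset.nonempty_range_iff.mpr (Nat.one_le_iff_ne_zero.mp (hn ω))) (fun i => p i ω))
    (hηint : Integrable η) :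
    ∫ ω, η ω ≤ (∫ ω, (n ω : ℝ)) ^ ((1 : ℝ) / k) * (∫ ω, (p 0 ω) ^ k) ^ ((1 : ℝ) / k) :=
  stmt_4_general p n hpmeas hnmeas hp0 hn hident hnindep k hk hmom hnint η hη hηint
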